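/- arXiv:2002.06601 — 4 statements merged into one kernel-verified Lean document; each statement's English description precedes it below -/
import Mathlib

section
/- For integers a ≥ b ≥ 0 and a real number q ≥ 2, the Gaussian binomial coefficient satisfies q^(b(a-b)) ≤ [a choose b]_q ≤ (1 + 5/q) · q^(b(a-b)). -/
/-- The Gaussian binomial coefficient for a real parameter `q` and naturals `a ≥ b`:
`[a choose b]_q = ∏_{i=0}^{b-1} (q^(a-i) - 1)/(q^(b-i) - 1)`. -/
noncomputable def gaussBinom (q : ℝ) (a b : ℕ) : ℝ :=
  ∏ i ∈ Finset.range b, (q ^ (a - i) - 1) / (q ^ (b - i) - 1)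

/-!
Write `a = b + c`. After reversing the order of the factors, `[b + c choose b]_q` is the product
over `n = 1, …, b` of `(q^(c+n) - 1)/(q^n - 1)`, and each such factor lies between `q^c` and
`q^c / (1 - q⁻ⁿ)`. So `q^(bc) ≤ [b + c choose b]_q ≤ q^(bc) / ∏_{n ≤ b} (1 - q⁻ⁿ)`, and it remains to
bound the partial Euler product `∏ (1 - xⁿ)` below by `1/(1 + 5x)` for `0 ≤ x ≤ 1/2`: keep the first
three factors and estimate the rest by `∏ (1 - yᵢ) ≥ 1 - ∑ yᵢ` and a geometric series.
-/

open Finset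

theorem Finset.one_sub_sum_le_prod_one_sub {ι R : Type*} [CommRing R] [PartialOrder R]
    [IsOrderedRing R] (s : Finset ι) {f : ι → R} (hf0 : ∀ i ∈ s, 0 ≤ f i)
    (hf1 : ∀ i ∈ s, f i ≤ 1) : 1 - ∑ i ∈ s, f i ≤ ∏ i ∈ s, (1 - f i) := by
  classical
  induction s using Finset.induction_on with
  | empty => simp
  | insert a s ha ih =>
    rw [sum_insert ha, prod_insert ha]
    have ha0 := hf0 a (mem_insert_self a s)
    have hs : 0 ≤ ∑ i ∈ s, f i := sum_nonneg fun i hi ↦ hf0 i (mem_insert_of_mem hi)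
    calc 1 - (f a + ∑ i ∈ s, f i) ≤ (1 - f a) * (1 - ∑ i ∈ s, f i) := by
          linear_combination mul_nonneg ha0 hs
      _ ≤ (1 - f a) * ∏ i ∈ s, (1 - f i) := by
          gcongr
          · exact sub_nonneg.2 (hf1 a (mem_insert_self a s))
          · exact ih (fun i hi ↦ hf0 i (mem_insert_of_mem hi))
              (fun i hi ↦ hf1 i (mem_insert_of_mem hi))

section EulerProduct

variable {K : Type*} [Field K] [LinearOrder K] [IsStrictOrderedRing K] {x : K}

theorem prod_range_one_sub_pow_mul_tail_le (hx0 : 0 ≤ x) (hx1 : x < 1) (m n : ℕ) :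
    (∏ j ∈ range m, (1 - x ^ (j + 1))) * (1 - x ^ (m + 1) / (1 - x)) ≤
      ∏ j ∈ range n, (1 - x ^ (j + 1)) := by
  have hpow1 (j : ℕ) : x ^ (j + 1) ≤ 1 := pow_le_one₀ hx0 hx1.le
  have hfac0 (j : ℕ) : 0 ≤ 1 - x ^ (j + 1) := sub_nonneg.2 (hpow1 j)
  rcases le_total m n with hmn | hnm
  · rw [← prod_range_mul_prod_Ico _ hmn]
    gcongr
    · exact prod_nonneg fun j _ ↦ hfac0 j
    calc 1 - x ^ (m + 1) / (1 - x) ≤ 1 - ∑ j ∈ Ico m n, x ^ (j + 1) := by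
          simp_rw [pow_succ, ← sum_mul, mul_div_right_comm]
          gcongr
          exact geom_sum_Ico_le_of_lt_one hx0 hx1
      _ ≤ ∏ j ∈ Ico m n, (1 - x ^ (j + 1)) :=
          one_sub_sum_le_prod_one_sub _ (fun j _ ↦ pow_nonneg hx0 _) fun j _ ↦ hpow1 j
  · calc _ ≤ ∏ j ∈ range m, (1 - x ^ (j + 1)) :=
          mul_le_of_le_one_right (prod_nonneg fun j _ ↦ hfac0 j)
            (sub_le_self _ (div_nonneg (pow_nonneg hx0 _) (sub_nonneg.2 hx1.le)))
      _ ≤ _ := prod_le_prod_of_subset_of_le_one (range_subset_range.2 hnm)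
          (fun j _ ↦ hfac0 j) fun j _ _ ↦ sub_le_self _ (pow_nonneg hx0 _)

/-- At `x = 1/2` the Euler product `∏ (1 - 2⁻ʲ) ≈ 0.2888` is close to `2/7 ≈ 0.2857`, so the
first three factors have to be kept exactly before the geometric tail estimate is used. -/
theorem inv_one_add_five_mul_le_prod_range_one_sub_pow (hx0 : 0 ≤ x) (hx : x ≤ 1 / 2)
    (n : ℕ) : (1 + 5 * x)⁻¹ ≤ ∏ j ∈ range n, (1 - x ^ (j + 1)) := by
  have h1x : 0 < 1 - x := by linarith
  have hpoly : 1 ≤ (1 - x ^ 2) * (1 - x ^ 3) * (1 - x - x ^ 4) * (1 + 5 * x) := by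
    have h := sub_nonneg.2 hx
    nlinarith [mul_nonneg hx0 h, mul_nonneg (pow_nonneg hx0 2) h, mul_nonneg (pow_nonneg hx0 3) h,
      mul_nonneg (pow_nonneg hx0 4) h, pow_nonneg hx0 5, pow_nonneg hx0 6, pow_nonneg hx0 7]
  calc (1 + 5 * x)⁻¹ ≤ (1 - x ^ 2) * (1 - x ^ 3) * (1 - x - x ^ 4) := by
        rw [inv_le_iff_one_le_mul₀ (by positivity)]
        linarith
    _ = (∏ j ∈ range 3, (1 - x ^ (j + 1))) * (1 - x ^ (3 + 1) / (1 - x)) := by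
        simp only [prod_range_succ, prod_range_zero]
        field_simp
        ring
    _ ≤ _ := prod_range_one_sub_pow_mul_tail_le hx0 (by linarith) 3 n

end EulerProduct

section GeomRatio

variable {K : Type*} [Field K] [LinearOrder K] [IsStrictOrderedRing K] {q : K} {n : ℕ}

theorem pow_le_pow_add_sub_one_div_pow_sub_one (hq : 1 < q) (hn : n ≠ 0) (c : ℕ) :
    q ^ c ≤ (q ^ (c + n) - 1) / (q ^ n - 1) := by
  have hqn : 1 < q ^ n := one_lt_pow₀ hq hn
  rw [le_div_iff₀ (sub_pos.2 hqn), pow_add]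
  nlinarith [one_le_pow₀ (n := c) hq.le]

theorem pow_add_sub_one_div_pow_sub_one_le (hq : 1 < q) (hn : n ≠ 0) (c : ℕ) :
    (q ^ (c + n) - 1) / (q ^ n - 1) ≤ q ^ c / (1 - q⁻¹ ^ n) := by
  have hqn : 1 < q ^ n := one_lt_pow₀ hq hn
  calc (q ^ (c + n) - 1) / (q ^ n - 1) ≤ q ^ (c + n) / (q ^ n - 1) := by
        gcongr
        linarith
    _ = q ^ c / (1 - q⁻¹ ^ n) := by
        rw [inv_pow, pow_add]
        field_simp

end GeomRatio

theorem gaussBinom_add_eq_prod (q : ℝ) (b c : ℕ) :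
    gaussBinom q (b + c) b = ∏ k ∈ range b, (q ^ (c + (k + 1)) - 1) / (q ^ (k + 1) - 1) := by
  rw [gaussBinom, ← prod_range_reflect]
  refine prod_congr rfl fun k hk ↦ ?_
  have hk := mem_range.1 hk
  rw [show b + c - (b - 1 - k) = c + (k + 1) by omega, show b - (b - 1 - k) = k + 1 by omega]

theorem pow_mul_eq_prod_const {M : Type*} [CommMonoid M] (q : M) (b c : ℕ) : q ^ (b * c) = ∏ _k ∈ range b, q ^ c := by
  rw [prod_const, card_range, pow_mul']

theorem pow_mul_le_gaussBinom_add {q : ℝ} (hq : 1 < q) (b c : ℕ) :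
    q ^ (b * c) ≤ gaussBinom q (b + c) b := by
  rw [gaussBinom_add_eq_prod, pow_mul_eq_prod_const]
  exact prod_le_prod (fun _ _ ↦ by positivity)
    fun k _ ↦ pow_le_pow_add_sub_one_div_pow_sub_one hq (Nat.succ_ne_zero k) c

theorem gaussBinom_add_le_div_prod {q : ℝ} (hq : 1 < q) (b c : ℕ) :
    gaussBinom q (b + c) b ≤ q ^ (b * c) / ∏ k ∈ range b, (1 - q⁻¹ ^ (k + 1)) := by
  rw [gaussBinom_add_eq_prod, pow_mul_eq_prod_const, ← prod_div_distrib]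
  exact prod_le_prod
    (fun k _ ↦ (pow_nonneg (by positivity) c).trans
      (pow_le_pow_add_sub_one_div_pow_sub_one hq (Nat.succ_ne_zero k) c))
    fun k _ ↦ pow_add_sub_one_div_pow_sub_one_le hq (Nat.succ_ne_zero k) c

theorem gauss_binom_bounds_q_ge_two (q : ℝ) (a b : ℕ) (hq : 2 ≤ q) (hab : b ≤ a) :
    q ^ (b * (a - b)) ≤ gaussBinom q a b ∧
      gaussBinom q a b ≤ (1 + 5 / q) * q ^ (b * (a - b)) := by
  obtain ⟨c, rfl⟩ := Nat.exists_eq_add_of_le hab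
  rw [Nat.add_sub_cancel_left]
  have hq1 : 1 < q := by linarith
  have hprod : (1 + 5 * q⁻¹)⁻¹ ≤ ∏ k ∈ range b, (1 - q⁻¹ ^ (k + 1)) :=
    inv_one_add_five_mul_le_prod_range_one_sub_pow (by positivity)
      (by rw [one_div]; exact inv_anti₀ two_pos hq) b
  refine ⟨pow_mul_le_gaussBinom_add hq1 b c, ?_⟩
  calc gaussBinom q (b + c) b ≤ q ^ (b * c) / ∏ k ∈ range b, (1 - q⁻¹ ^ (k + 1)) :=
        gaussBinom_add_le_div_prod hq1 b c
    _ ≤ q ^ (b * c) / (1 + 5 * q⁻¹)⁻¹ := by gcongr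
    _ = (1 + 5 / q) * q ^ (b * c) := by rw [div_inv_eq_mul, div_eq_mul_inv, mul_comm]
end

section
/- Let q be a prime power and n ≥ 2k ≥ 2. If A and B are two disjoint k-dimensional subspaces of F_q^n, then the number of k-dimensional subspaces of F_q^n disjoint from both A and B is at least q^(k²) · [n-k choose k]_q - [k]_q · [n-1 choose k-1]_q, where [k]_q = (q^k - 1)/(q-1). -/
/-- The Gaussian binomial coefficient `[n choose k]_q` as a natural number,
defined by the Pascal-type recurrence `[n+1, k+1]_q = q^(k+1)·[n, k+1]_q + [n, k]_q`. -/
def qbin (q : ℕ) : ℕ → ℕ → ℕ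
  | _, 0 => 1
  | 0, _ + 1 => 0
  | n + 1, k + 1 => q ^ (k + 1) * qbin q n (k + 1) + qbin q n k

lemma prod_shift (q : ℤ) (s j : ℕ) :
    ∏ i ∈ Finset.range j, (q ^ (s + 1) - q ^ (i + 1)) =
      q ^ j * ∏ i ∈ Finset.range j, (q ^ s - q ^ i) := by
  calc ∏ i ∈ Finset.range j, (q ^ (s + 1) - q ^ (i + 1))
      = ∏ i ∈ Finset.range j, (q * (q ^ s - q ^ i)) :=
        Finset.prod_congr rfl fun i _ => by ring
    _ = (∏ _i ∈ Finset.range j, q) * ∏ i ∈ Finset.range j, (q ^ s - q ^ i) :=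
        Finset.prod_mul_distrib
    _ = q ^ j * ∏ i ∈ Finset.range j, (q ^ s - q ^ i) := by
        rw [Finset.prod_const, Finset.card_range]

lemma qbin_id (q : ℕ) : ∀ m j : ℕ,
    (qbin q m j : ℤ) * ∏ i ∈ Finset.range j, ((q : ℤ) ^ j - (q : ℤ) ^ i) =
      ∏ i ∈ Finset.range j, ((q : ℤ) ^ m - (q : ℤ) ^ i) := by
  intro m
  induction m with
  | zero =>
    intro j
    cases j with
    | zero => simp [qbin]
    | succ j =>
      rw [Finset.prod_range_succ' (f := fun i => ((q:ℤ) ^ 0 - (q:ℤ) ^ i))]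
      simp [qbin]
  | succ m ih =>
    intro j
    cases j with
    | zero => simp [qbin]
    | succ j =>
      have hC : ∏ i ∈ Finset.range (j + 1), ((q:ℤ) ^ (j+1) - (q:ℤ) ^ i) =
          ((q:ℤ) ^ j * ∏ i ∈ Finset.range j, ((q:ℤ) ^ j - (q:ℤ) ^ i)) * ((q:ℤ) ^ (j+1) - 1) := by
        rw [Finset.prod_range_succ', prod_shift]; ring_nf
      have hA : ∏ i ∈ Finset.range (j + 1), ((q:ℤ) ^ (m+1) - (q:ℤ) ^ i) =
          ((q:ℤ) ^ j * ∏ i ∈ Finset.range j, ((q:ℤ) ^ m - (q:ℤ) ^ i)) * ((q:ℤ) ^ (m+1) - 1) := by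
        rw [Finset.prod_range_succ', prod_shift]; ring_nf
      have h1 := ih (j + 1)
      have h2 := ih j
      rw [hC, Finset.prod_range_succ] at h1
      show ((q ^ (j + 1) * qbin q m (j + 1) + qbin q m j : ℕ) : ℤ) * _ = _
      push_cast
      rw [hA, hC]
      linear_combination ((q:ℤ))^(j+1) * h1 + (q:ℤ)^j*((q:ℤ)^(j+1)-1)*h2

open Module Submodule Finset

section AuxCounting

variable {F V : Type*} [Field F] [Fintype F] [AddCommGroup V] [Module F V] [Finite V]

local notation "q" => Fintype.card F

lemma card_li_mod (U : Submodule F V) (j : ℕ) :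
    Nat.card {f : Fin j → V // LinearIndependent F (⇑U.mkQ ∘ f)} =
      (Nat.card {g : Fin j → V ⧸ U // LinearIndependent F g}) * (Nat.card U) ^ j := by
  obtain ⟨σ, hσ⟩ := U.mkQ.exists_rightInverse_of_surjective
    (by rw [Submodule.range_mkQ])
  have hσ' : ∀ x, U.mkQ (σ x) = x := fun x => congrArg (fun f => f x) (congrArg DFunLike.coe hσ)
  have hmk : ∀ u : U, U.mkQ (u : V) = 0 := fun u => by
    rw [Submodule.mkQ_apply, Submodule.Quotient.mk_eq_zero]; exact u.2
  have e : {f : Fin j → V // LinearIndependent F (⇑U.mkQ ∘ f)} ≃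
      ({g : Fin j → V ⧸ U // LinearIndependent F g} × (Fin j → U)) :=
    { toFun := fun f => (⟨⇑U.mkQ ∘ f.1, f.2⟩,
        fun i => ⟨f.1 i - σ (U.mkQ (f.1 i)), by
          rw [← Submodule.Quotient.mk_eq_zero U, ← Submodule.mkQ_apply, map_sub, hσ', sub_self]⟩),
      invFun := fun p => ⟨fun i => σ (p.1.1 i) + (p.2 i : V), by
        have : ⇑U.mkQ ∘ (fun i => σ (p.1.1 i) + (p.2 i : V)) = p.1.1 := by
          funext i
          simp only [Function.comp_apply, map_add, hσ', hmk, add_zero]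
        rw [this]; exact p.1.2⟩,
      left_inv := fun f => by
        apply Subtype.ext; funext i
        show σ (U.mkQ (f.1 i)) + (f.1 i - σ (U.mkQ (f.1 i))) = f.1 i
        abel
      right_inv := fun p => by
        refine Prod.ext (Subtype.ext ?_) (funext fun i => Subtype.ext ?_)
        · funext i
          show U.mkQ (σ (p.1.1 i) + (p.2 i : V)) = p.1.1 i
          simp only [map_add, hσ', hmk, add_zero]
        · show σ (p.1.1 i) + (p.2 i : V) - σ (U.mkQ (σ (p.1.1 i) + (p.2 i : V))) = (p.2 i : V)
          simp only [map_add, hσ', hmk, add_zero]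
          abel }
  rw [Nat.card_congr e, Nat.card_prod, Nat.card_fun, Nat.card_eq_fintype_card (α := Fin j),
    Fintype.card_fin]

lemma card_disjoint_mul (U : Submodule F V) (j : ℕ) (hdj : finrank F U + j ≤ finrank F V) :
    Nat.card {W : Submodule F V // finrank F W = j ∧ W ⊓ U = ⊥} *
        ∏ i ∈ range j, (q ^ j - q ^ i) =
      ∏ i ∈ range j, (q ^ (finrank F V) - q ^ (finrank F U + i)) := by
  classical
  have hQfin : Finite (V ⧸ U) := Finite.of_surjective _ U.mkQ_surjective
  have hQrank : finrank F (V ⧸ U) = finrank F V - finrank F U := by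
    have := Submodule.finrank_quotient_add_finrank U
    omega
  set T := {W : Submodule F V // finrank F W = j ∧ W ⊓ U = ⊥} with hT
  have li_of : ∀ f : {f : Fin j → V // LinearIndependent F (⇑U.mkQ ∘ f)},
      LinearIndependent F f.1 := fun f => LinearIndependent.of_comp U.mkQ f.2
  have span_disj : ∀ f : {f : Fin j → V // LinearIndependent F (⇑U.mkQ ∘ f)},
      span F (Set.range f.1) ⊓ U = ⊥ := by
    intro f
    rw [eq_bot_iff]
    intro x hx
    obtain ⟨hx1, hx2⟩ := Submodule.mem_inf.1 hx
    obtain ⟨c, rfl⟩ := (mem_span_range_iff_exists_fun F).1 hx1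
    have h0 : ∑ i, c i • (⇑U.mkQ ∘ f.1) i = 0 := by
      have h : U.mkQ (∑ i, c i • f.1 i) = 0 := by
        rw [Submodule.mkQ_apply, Submodule.Quotient.mk_eq_zero]; exact hx2
      simpa [Function.comp, map_sum] using h
    have hc := (Fintype.linearIndependent_iff.1 f.2) c h0
    simp [hc]
  let π : {f : Fin j → V // LinearIndependent F (⇑U.mkQ ∘ f)} → T := fun f =>
    ⟨span F (Set.range f.1), by
      constructor
      · rw [finrank_span_eq_card (li_of f), Fintype.card_fin]
      · exact span_disj f⟩
  have fib : ∀ W : T, {f // π f = W} ≃ {h : Fin j → W.1 // LinearIndependent F h} := by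
    intro W
    refine
      { toFun := fun f => ⟨fun i => ⟨f.1.1 i, ?_⟩, ?_⟩,
        invFun := fun h => ⟨⟨fun i => (h.1 i : V), ?_⟩, ?_⟩,
        left_inv := fun f => Subtype.ext (Subtype.ext (funext fun i => rfl)),
        right_inv := fun h => Subtype.ext (funext fun i => Subtype.ext rfl) }
    · have hsp : span F (Set.range f.1.1) = W.1 := congrArg Subtype.val f.2
      exact hsp ▸ subset_span (Set.mem_range_self i)
    · exact LinearIndependent.of_comp W.1.subtype (li_of f.1)
    · have hli : LinearIndependent F (fun i => (h.1 i : V)) :=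
        h.2.map' W.1.subtype (Submodule.ker_subtype _)
      have hsp : span F (Set.range fun i => (h.1 i : V)) = W.1 := by
        have htop : span F (Set.range h.1) = ⊤ :=
          h.2.span_eq_top_of_card_eq_finrank' (by rw [Fintype.card_fin, W.2.1])
        have hre : (Set.range fun i => (h.1 i : V)) = W.1.subtype '' Set.range h.1 := by
          rw [← Set.range_comp]; rfl
        rw [hre, ← Submodule.map_span, htop, Submodule.map_top, Submodule.range_subtype]
      exact hli.map (by
        rw [hsp, Submodule.ker_mkQ]
        exact disjoint_iff.2 W.2.2)
    · apply Subtype.ext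
      show span F (Set.range fun i => (h.1 i : V)) = W.1
      have htop : span F (Set.range h.1) = ⊤ :=
        h.2.span_eq_top_of_card_eq_finrank' (by rw [Fintype.card_fin, W.2.1])
      have hre : (Set.range fun i => (h.1 i : V)) = W.1.subtype '' Set.range h.1 := by
        rw [← Set.range_comp]; rfl
      rw [hre, ← Submodule.map_span, htop, Submodule.map_top, Submodule.range_subtype]
  have hS1 : Nat.card {f : Fin j → V // LinearIndependent F (⇑U.mkQ ∘ f)} =
      Nat.card T * ∏ i ∈ range j, (q ^ j - q ^ i) := by
    rw [Nat.card_congr (Equiv.sigmaFiberEquiv π).symm]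
    have hcf : ∀ W : T, Nat.card {f // π f = W} = ∏ i ∈ range j, (q ^ j - q ^ i) := by
      intro W
      rw [Nat.card_congr (fib W)]
      have hfr : finrank F W.1 = j := W.2.1
      rw [card_linearIndependent (K := F) (V := W.1) (k := j) (by rw [hfr]), hfr,
        ← Fin.prod_univ_eq_prod_range]
    letI : Fintype T := Fintype.ofFinite _
    letI : ∀ W : T, Fintype {f // π f = W} := fun W => Fintype.ofFinite _
    rw [Nat.card_eq_fintype_card, Fintype.card_sigma, Nat.card_eq_fintype_card (α := T)]
    calc ∑ W : T, Fintype.card {f // π f = W}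
        = ∑ _W : T, ∏ i ∈ range j, (q ^ j - q ^ i) :=
          Finset.sum_congr rfl fun W _ => by rw [← Nat.card_eq_fintype_card]; exact hcf W
      _ = Fintype.card T * ∏ i ∈ range j, (q ^ j - q ^ i) := by
          rw [Finset.sum_const, smul_eq_mul, Finset.card_univ]
  have hS2 : Nat.card {f : Fin j → V // LinearIndependent F (⇑U.mkQ ∘ f)} =
      ∏ i ∈ range j, (q ^ (finrank F V) - q ^ (finrank F U + i)) := by
    rw [card_li_mod]
    have hg : Nat.card {g : Fin j → V ⧸ U // LinearIndependent F g} =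
        ∏ i ∈ range j, (q ^ (finrank F V - finrank F U) - q ^ i) := by
      rw [card_linearIndependent (K := F) (V := V ⧸ U) (k := j) (by omega), hQrank,
        ← Fin.prod_univ_eq_prod_range]
    have hcU : Nat.card U = q ^ finrank F U := by
      letI : Fintype U := Fintype.ofFinite _
      rw [Nat.card_eq_fintype_card, card_eq_pow_finrank (K := F)]
    have hpc : (q ^ finrank F U) ^ j = ∏ _i ∈ range j, q ^ finrank F U := by
      rw [Finset.prod_const, Finset.card_range]
    rw [hg, hcU, hpc, ← Finset.prod_mul_distrib]
    refine Finset.prod_congr rfl fun i _ => ?_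
    have h1 : q ^ finrank F U * q ^ (finrank F V - finrank F U) = q ^ finrank F V := by
      rw [← pow_add]; congr 1; omega
    have h2 : q ^ finrank F U * q ^ i = q ^ (finrank F U + i) := by rw [← pow_add]
    rw [mul_comm, Nat.mul_sub, h1, h2]
  rw [← hS1, hS2]

lemma finrank_map_mkQ_add (L W : Submodule F V) (h : L ≤ W) :
    finrank F (Submodule.map L.mkQ W) + finrank F L = finrank F W := by
  have hr := LinearMap.finrank_range_add_finrank_ker (L.mkQ.domRestrict W)
  have h1 : LinearMap.range (L.mkQ.domRestrict W) = Submodule.map L.mkQ W := by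
    rw [LinearMap.range_domRestrict]
  have h2 : LinearMap.ker (L.mkQ.domRestrict W) = Submodule.comap W.subtype L := by
    ext x; simp [LinearMap.mem_ker, Submodule.mem_comap, Submodule.Quotient.mk_eq_zero]
  rw [h1, h2] at hr
  rw [(Submodule.comapSubtypeEquivOfLe h).finrank_eq] at hr
  exact hr

lemma card_through_line (L : Submodule F V) (hL : finrank F L = 1) (k : ℕ)
    (hk : 1 ≤ k) (hkn : k ≤ finrank F V) :
    Nat.card {W : Submodule F V // finrank F W = k ∧ L ≤ W} *
        ∏ i ∈ range (k - 1), (q ^ (k - 1) - q ^ i) =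
      ∏ i ∈ range (k - 1), (q ^ (finrank F V - 1) - q ^ i) := by
  have hQfin : Finite (V ⧸ L) := Finite.of_surjective _ L.mkQ_surjective
  have hQrank : finrank F (V ⧸ L) = finrank F V - 1 := by
    have := Submodule.finrank_quotient_add_finrank L
    omega
  have e : {W' : Submodule F (V ⧸ L) // finrank F W' = k - 1 ∧ W' ⊓ ⊥ = ⊥} ≃
      {W : Submodule F V // finrank F W = k ∧ L ≤ W} :=
    { toFun := fun W' => ⟨Submodule.comap L.mkQ W'.1, by
        have hle : L ≤ Submodule.comap L.mkQ W'.1 := by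
          intro x hx
          have : L.mkQ x = 0 := by
            rw [Submodule.mkQ_apply, Submodule.Quotient.mk_eq_zero]; exact hx
          show L.mkQ x ∈ W'.1
          rw [this]; exact zero_mem _
        have hmc : Submodule.map L.mkQ (Submodule.comap L.mkQ W'.1) = W'.1 := by
          rw [Submodule.map_comap_eq, Submodule.range_mkQ, top_inf_eq]
        have := finrank_map_mkQ_add L _ hle
        rw [hmc, hL, W'.2.1] at this
        exact ⟨by omega, hle⟩⟩,
      invFun := fun W => ⟨Submodule.map L.mkQ W.1, by
        have := finrank_map_mkQ_add L W.1 W.2.2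
        rw [hL, W.2.1] at this
        exact ⟨by omega, inf_bot_eq _⟩⟩,
      left_inv := fun W' => Subtype.ext (by
        show Submodule.map L.mkQ (Submodule.comap L.mkQ W'.1) = W'.1
        rw [Submodule.map_comap_eq, Submodule.range_mkQ, top_inf_eq]),
      right_inv := fun W => Subtype.ext (by
        show Submodule.comap L.mkQ (Submodule.map L.mkQ W.1) = W.1
        rw [Submodule.comap_map_eq, Submodule.ker_mkQ, sup_eq_left.2 W.2.2]) }
  have hD := card_disjoint_mul (V := V ⧸ L) ⊥ (k - 1)
    (by rw [finrank_bot F (V ⧸ L), hQrank]; omega)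
  rw [finrank_bot F (V ⧸ L), hQrank] at hD
  rw [← Nat.card_congr e, hD]
  exact Finset.prod_congr rfl fun i _ => by rw [Nat.zero_add]

lemma card_lines (B : Submodule F V) (k : ℕ) (hB : finrank F B = k) (hk : 1 ≤ k) :
    Nat.card {L : Submodule F V // finrank F L = 1 ∧ L ≤ B} * (q - 1) = q ^ k - 1 := by
  have e : {L' : Submodule F B // finrank F L' = 1 ∧ L' ⊓ ⊥ = ⊥} ≃
      {L : Submodule F V // finrank F L = 1 ∧ L ≤ B} :=
    { toFun := fun L' => ⟨Submodule.map B.subtype L'.1,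
        by rw [Submodule.finrank_map_subtype_eq]; exact L'.2.1,
        Submodule.map_subtype_le B L'.1⟩,
      invFun := fun L => ⟨Submodule.comap B.subtype L.1,
        by rw [(Submodule.comapSubtypeEquivOfLe L.2.2).finrank_eq]; exact L.2.1,
        inf_bot_eq _⟩,
      left_inv := fun L' => Subtype.ext (by
        show Submodule.comap B.subtype (Submodule.map B.subtype L'.1) = L'.1
        rw [Submodule.comap_map_eq, Submodule.ker_subtype, sup_bot_eq]),
      right_inv := fun L => Subtype.ext (by
        show Submodule.map B.subtype (Submodule.comap B.subtype L.1) = L.1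
        rw [Submodule.map_comap_eq, Submodule.range_subtype, inf_eq_right.2 L.2.2]) }
  have hD := card_disjoint_mul (V := B) ⊥ 1
    (by rw [finrank_bot F B, hB]; omega)
  rw [finrank_bot F B, hB] at hD
  simp only [Finset.range_one, Finset.prod_singleton, pow_one, pow_zero, Nat.zero_add] at hD
  rw [← Nat.card_congr e, hD]

end AuxCounting

lemma cast_qprod1 (q j s : ℕ) (hg : ∀ i, i < j → i ≤ s) (hq : 1 ≤ q) :
    ((∏ i ∈ range j, (q ^ s - q ^ i) : ℕ) : ℝ) =
      ∏ i ∈ range j, ((q : ℝ) ^ s - (q : ℝ) ^ i) := by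
  rw [Nat.cast_prod]
  refine Finset.prod_congr rfl fun i hi => ?_
  rw [Nat.cast_sub (Nat.pow_le_pow_right hq (hg i (mem_range.1 hi)))]
  push_cast; ring

lemma cast_qprod2 (q j s t : ℕ) (hg : ∀ i, i < j → t + i ≤ s) (hq : 1 ≤ q) :
    ((∏ i ∈ range j, (q ^ s - q ^ (t + i)) : ℕ) : ℝ) =
      ∏ i ∈ range j, ((q : ℝ) ^ s - (q : ℝ) ^ (t + i)) := by
  rw [Nat.cast_prod]
  refine Finset.prod_congr rfl fun i hi => ?_
  rw [Nat.cast_sub (Nat.pow_le_pow_right hq (hg i (mem_range.1 hi)))]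
  push_cast; ring

lemma qbin_idR (q m j : ℕ) :
    (qbin q m j : ℝ) * ∏ i ∈ range j, ((q : ℝ) ^ j - (q : ℝ) ^ i) =
      ∏ i ∈ range j, ((q : ℝ) ^ m - (q : ℝ) ^ i) := by
  have := qbin_id q m j
  have h2 := congrArg (fun z : ℤ => (z : ℝ)) this
  push_cast at h2
  exact h2

theorem count_disjoint_from_two (q n k : ℕ) (F : Type*) [Field F] [Fintype F]
    (hq : Fintype.card F = q) (hk : 1 ≤ k) (hkn : 2 * k ≤ n)
    (A B : Submodule F (Fin n → F)) (hA : Module.finrank F A = k)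
    (hB : Module.finrank F B = k) (hAB : A ⊓ B = ⊥) :
    ((q : ℝ) ^ (k ^ 2) * qbin q (n - k) k -
        ((q : ℝ) ^ k - 1) / (q - 1) * qbin q (n - 1) (k - 1)) ≤
      (Nat.card {W : Submodule F (Fin n → F) //
        Module.finrank F W = k ∧ W ⊓ A = ⊥ ∧ W ⊓ B = ⊥} : ℝ) := by
  classical
  set V := Fin n → F with hV
  have hn : finrank F V = n := by
    rw [Module.finrank_fintype_fun_eq_card, Fintype.card_fin]
  have hq2 : 2 ≤ q := hq ▸ Fintype.one_lt_card
  have hq1 : (1:ℝ) < (q:ℝ) := by exact_mod_cast hq2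
  have hFinSub : Finite (Submodule F V) :=
    Finite.of_injective _ (SetLike.coe_injective (A := Submodule F V))
  -- types
  set G := {W : Submodule F V // finrank F W = k ∧ W ⊓ A = ⊥} with hG
  set T := {W : Submodule F V // finrank F W = k ∧ W ⊓ A = ⊥ ∧ W ⊓ B = ⊥} with hT
  set LinesB := {L : Submodule F V // finrank F L = 1 ∧ L ≤ B} with hLB
  set Bad := {W : G // ¬ (W.1 ⊓ B = ⊥)} with hBad
  -- split
  have eT : {W : G // W.1 ⊓ B = ⊥} ≃ T :=
    { toFun := fun W => ⟨W.1.1, W.1.2.1, W.1.2.2, W.2⟩,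
      invFun := fun W => ⟨⟨W.1, W.2.1, W.2.2.1⟩, W.2.2.2⟩,
      left_inv := fun _ => rfl, right_inv := fun _ => rfl }
  have hsplit : Nat.card T + Nat.card Bad = Nat.card G := by
    rw [← Nat.card_congr eT, ← Nat.card_sum]
    exact Nat.card_congr (Equiv.sumCompl _)
  -- count G
  have hGcount := card_disjoint_mul (F := F) (V := V) A k (by rw [hA, hn]; omega)
  rw [hA, hn, hq] at hGcount
  -- bad bound via sigma
  set Sig := (Σ L : LinesB, {W : Submodule F V // finrank F W = k ∧ L.1 ≤ W}) with hSig
  have hBadle : Nat.card Bad ≤ Nat.card Sig := by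
    have hline : ∀ W : Bad, ∃ x : V, x ∈ W.1.1 ⊓ B ∧ x ≠ 0 := by
      intro W
      obtain ⟨x, hx, hx0⟩ := Submodule.exists_mem_ne_zero_of_ne_bot W.2
      exact ⟨x, hx, hx0⟩
    choose x hx hx0 using hline
    let f : Bad → Sig := fun W =>
      ⟨⟨span F {x W}, finrank_span_singleton (hx0 W),
        (Submodule.span_singleton_le_iff_mem _ _).2 ((Submodule.mem_inf.1 (hx W)).2)⟩,
       ⟨W.1.1, W.1.2.1,
        (Submodule.span_singleton_le_iff_mem _ _).2 ((Submodule.mem_inf.1 (hx W)).1)⟩⟩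
    have hfinj : Function.Injective f := by
      intro W₁ W₂ h
      have := congrArg (fun p : Sig => p.2.1) h
      exact Subtype.ext (Subtype.ext this)
    exact Nat.card_le_card_of_injective f hfinj
  -- sigma count
  have hSigCount : Nat.card Sig * ∏ i ∈ range (k - 1), (q ^ (k - 1) - q ^ i) =
      Nat.card LinesB * ∏ i ∈ range (k - 1), (q ^ (n - 1) - q ^ i) := by
    letI : Fintype LinesB := Fintype.ofFinite _
    letI : ∀ L : LinesB, Fintype {W : Submodule F V // finrank F W = k ∧ L.1 ≤ W} :=
      fun L => Fintype.ofFinite _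
    rw [Nat.card_eq_fintype_card, Fintype.card_sigma, Finset.sum_mul,
      Nat.card_eq_fintype_card (α := LinesB)]
    have : ∀ L : LinesB,
        Fintype.card {W : Submodule F V // finrank F W = k ∧ L.1 ≤ W} *
          ∏ i ∈ range (k - 1), (q ^ (k - 1) - q ^ i) =
        ∏ i ∈ range (k - 1), (q ^ (n - 1) - q ^ i) := by
      intro L
      have := card_through_line (F := F) (V := V) L.1 L.2.1 k hk (by omega)
      rw [hn, hq, Nat.card_eq_fintype_card] at this
      exact this
    rw [Finset.sum_congr rfl fun L _ => this L, Finset.sum_const, smul_eq_mul,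
      Finset.card_univ]
  -- lines count
  have hLcount := card_lines (F := F) (V := V) B k hB hk
  rw [hq] at hLcount
  -- move to ℝ
  have hqR1 : (1:ℕ) ≤ q := by omega
  have hc1pos : (0:ℝ) < ∏ i ∈ range k, ((q : ℝ) ^ k - (q : ℝ) ^ i) := by
    apply Finset.prod_pos
    intro i hi
    have : (q:ℝ) ^ i < (q:ℝ) ^ k := pow_lt_pow_right₀ hq1 (mem_range.1 hi)
    linarith
  have hc2pos : (0:ℝ) < ∏ i ∈ range (k-1), ((q : ℝ) ^ (k-1) - (q : ℝ) ^ i) := by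
    apply Finset.prod_pos
    intro i hi
    have : (q:ℝ) ^ i < (q:ℝ) ^ (k-1) := pow_lt_pow_right₀ hq1 (mem_range.1 hi)
    linarith
  -- card G in ℝ
  have hA1 : ∏ i ∈ range k, ((q : ℝ) ^ n - (q : ℝ) ^ (k + i)) =
      (q : ℝ) ^ (k ^ 2) * ∏ i ∈ range k, ((q : ℝ) ^ (n - k) - (q : ℝ) ^ i) := by
    have h3 : ∀ i ∈ range k, (q : ℝ) ^ n - (q : ℝ) ^ (k + i) =
        (q:ℝ)^k * ((q : ℝ) ^ (n - k) - (q : ℝ) ^ i) := by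
      intro i hi
      have h1 : (q:ℝ) ^ n = (q:ℝ)^k * (q:ℝ)^(n-k) := by
        rw [← pow_add]; congr 1; omega
      have h2 : (q:ℝ) ^ (k+i) = (q:ℝ)^k * (q:ℝ)^i := by rw [← pow_add]
      rw [h1, h2]; ring
    rw [Finset.prod_congr rfl h3, Finset.prod_mul_distrib, Finset.prod_const,
      Finset.card_range, ← pow_mul, ← sq]
  have hGR : (Nat.card G : ℝ) = (q : ℝ) ^ (k ^ 2) * qbin q (n - k) k := by
    have hcast := congrArg (fun z : ℕ => (z : ℝ)) hGcount
    simp only [Nat.cast_mul] at hcast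
    rw [cast_qprod1 q k k (fun i hi => by omega) hqR1,
      cast_qprod2 q k n k (fun i hi => by omega) hqR1] at hcast
    have hid := qbin_idR q (n - k) k
    refine mul_right_cancel₀ (ne_of_gt hc1pos) ?_
    calc (Nat.card G : ℝ) * ∏ i ∈ range k, ((q : ℝ) ^ k - (q : ℝ) ^ i)
        = ∏ i ∈ range k, ((q : ℝ) ^ n - (q : ℝ) ^ (k + i)) := hcast
      _ = (q : ℝ) ^ (k ^ 2) * ∏ i ∈ range k, ((q : ℝ) ^ (n - k) - (q : ℝ) ^ i) := hA1
      _ = (q : ℝ) ^ (k ^ 2) * ((qbin q (n-k) k : ℝ) *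
            ∏ i ∈ range k, ((q : ℝ) ^ k - (q : ℝ) ^ i)) := by rw [qbin_idR q (n-k) k]
      _ = ((q : ℝ) ^ (k ^ 2) * qbin q (n - k) k) *
            ∏ i ∈ range k, ((q : ℝ) ^ k - (q : ℝ) ^ i) := by ring
  -- card Sig in ℝ
  have hSR : (Nat.card Sig : ℝ) = (Nat.card LinesB : ℝ) * qbin q (n-1) (k-1) := by
    have hcast := congrArg (fun z : ℕ => (z : ℝ)) hSigCount
    simp only [Nat.cast_mul] at hcast
    rw [cast_qprod1 q (k-1) (k-1) (fun i hi => by omega) hqR1,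
      cast_qprod1 q (k-1) (n-1) (fun i hi => by omega) hqR1] at hcast
    refine mul_right_cancel₀ (ne_of_gt hc2pos) ?_
    calc (Nat.card Sig : ℝ) * ∏ i ∈ range (k-1), ((q : ℝ) ^ (k-1) - (q : ℝ) ^ i)
        = (Nat.card LinesB : ℝ) * ∏ i ∈ range (k-1), ((q : ℝ) ^ (n-1) - (q : ℝ) ^ i) := hcast
      _ = (Nat.card LinesB : ℝ) * ((qbin q (n-1) (k-1) : ℝ) *
            ∏ i ∈ range (k-1), ((q : ℝ) ^ (k-1) - (q : ℝ) ^ i)) := by rw [qbin_idR q (n-1) (k-1)]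
      _ = ((Nat.card LinesB : ℝ) * qbin q (n-1) (k-1)) *
            ∏ i ∈ range (k-1), ((q : ℝ) ^ (k-1) - (q : ℝ) ^ i) := by ring
  -- lines in ℝ
  have hLR : (Nat.card LinesB : ℝ) = ((q:ℝ)^k - 1) / ((q:ℝ) - 1) := by
    have hcast := congrArg (fun z : ℕ => (z : ℝ)) hLcount
    simp only [Nat.cast_mul] at hcast
    rw [Nat.cast_sub (by omega : 1 ≤ q),
      Nat.cast_sub (Nat.one_le_pow _ _ (by omega))] at hcast
    push_cast at hcast
    rw [eq_div_iff (by linarith : (q:ℝ) - 1 ≠ 0)]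
    linarith [hcast]
  -- finish
  have hsplitR : (Nat.card T : ℝ) + Nat.card Bad = Nat.card G := by exact_mod_cast hsplit
  have hBadleR : (Nat.card Bad : ℝ) ≤ Nat.card Sig := by exact_mod_cast hBadle
  have hLpos : (0:ℝ) ≤ (Nat.card Sig : ℝ) := by positivity
  rw [hSR, hLR] at hBadleR
  rw [← hGR]
  linarith [hsplitR, hBadleR]
end

section
/- Let q be a prime power, n ≥ 2k ≥ 4, and P a point of F_q^n. If T is a k-dimensional subspace of F_q^n not containing P, then the number of k-dimensional subspaces containing P that intersect T non-trivially is at most [k]_q · [n-2 choose k-2]_q. -/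
/-!
Every `k`-space `W ∋ P` meeting `T` contains the plane `P + ⟨t⟩` for some point `⟨t⟩` of `T`
(a plane because `P ⊄ T`), and the `k`-spaces through a fixed plane embed into the
`(k - 2)`-spaces of the `(n - 2)`-dimensional quotient. Hence the count is at most
`[k]_q` times the number of `(k - 2)`-spaces of an `(n - 2)`-space.

That number is at most `[n - 2, k - 2]_q`, by induction along the recurrence defining `qbin`:
fix a line `p`; the `(j + 1)`-spaces through `p` correspond to `j`-spaces of `V ⧸ p`, while
those avoiding `p` are complements of `p` in the `(j + 2)`-space `p ⊔ W`. There are at most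
`q ^ (j + 1)` such complements, since a complement is determined by the restriction of its
projection onto `p` to a fixed complement.
-/

open Module Submodule
open scoped LinearAlgebra.Projectivization

theorem Nat.card_le_card_mul_of_card_fiber_le {α β : Type*} [Finite α] [Finite β] (f : α → β)
    {c : ℕ} (h : ∀ b, Nat.card {a // f a = b} ≤ c) : Nat.card α ≤ Nat.card β * c := by
  have := Fintype.ofFinite β
  rw [← Nat.card_congr (Equiv.sigmaFiberEquiv f), Nat.card_sigma, Nat.card_eq_fintype_card]
  simpa [mul_comm] using Finset.sum_le_card_nsmul Finset.univ _ c fun b _ ↦ h b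

theorem Nat.card_subtype_eq_card_and_add_card_and_not {α : Type*} [Finite α] (p r : α → Prop) :
    Nat.card {a // p a} = Nat.card {a // p a ∧ r a} + Nat.card {a // p a ∧ ¬ r a} := by
  classical
  rw [← Nat.card_sum]
  exact Nat.card_congr <| (Equiv.sumCompl fun a : {a // p a} ↦ r a).symm.trans <|
    (Equiv.subtypeSubtypeEquivSubtypeInter p r).sumCongr
      (Equiv.subtypeSubtypeEquivSubtypeInter p fun a ↦ ¬ r a)

section

variable {F V : Type*} [Field F] [AddCommGroup V] [Module F V] [FiniteDimensional F V]

theorem Submodule.disjoint_of_finrank_eq_one_of_not_le {p W : Submodule F V}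
    (hp : finrank F p = 1) (hpW : ¬ p ≤ W) : Disjoint p W := by
  rw [disjoint_iff]
  by_contra hne
  have : p ⊓ W = p := eq_of_le_of_finrank_le inf_le_left
    (hp ▸ one_le_finrank_iff.mpr hne)
  exact hpW (this ▸ inf_le_right)

theorem Submodule.finrank_map_mkQ_add_finrank_inf (p W : Submodule F V) :
    finrank F (W.map p.mkQ) + finrank F ↥(W ⊓ p) = finrank F W := by
  have h := LinearMap.finrank_range_add_finrank_ker (p.mkQ.domRestrict W)
  rwa [LinearMap.range_domRestrict, LinearMap.ker_domRestrict, ker_mkQ,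
    (equivMapOfInjective W.subtype W.injective_subtype _).finrank_eq,
    map_comap_subtype] at h

theorem Submodule.finrank_sup_of_disjoint {p W : Submodule F V} (h : Disjoint p W) :
    finrank F ↥(p ⊔ W) = finrank F p + finrank F W := by
  have := finrank_sup_add_finrank_inf_eq p W
  rwa [h.eq_bot, finrank_bot, add_zero] at this

theorem Submodule.card_finrank_eq_zero :
    Nat.card {W : Submodule F V // finrank F W = 0} = 1 :=
  Nat.card_eq_one_iff_unique.mpr ⟨⟨fun W₁ W₂ ↦ Subtype.ext <| by
    rw [finrank_eq_zero.mp W₁.2, finrank_eq_zero.mp W₂.2]⟩, ⟨⊥, finrank_bot F V⟩⟩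

variable [Finite F]

theorem Submodule.card_finrank_eq_and_le_le_card_quotient (p : Submodule F V) (j : ℕ) :
    Nat.card {W : Submodule F V // finrank F W = j ∧ p ≤ W} ≤
      Nat.card {W : Submodule F (V ⧸ p) // finrank F W = j - finrank F p} := by
  have := Module.finite_of_finite F (M := V ⧸ p)
  refine Nat.card_le_card_of_injective
    (fun W ↦ ⟨W.1.map p.mkQ, ?_⟩) fun W₁ W₂ h ↦ Subtype.ext ?_
  · have := finrank_map_mkQ_add_finrank_inf p W.1
    rw [inf_eq_right.mpr W.2.2, W.2.1] at this
    omega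
  · have := congrArg (comap p.mkQ ·.1) h
    simpa [comap_map_mkQ, sup_eq_right.mpr W₁.2.2, sup_eq_right.mpr W₂.2.2] using this

theorem Submodule.card_isCompl_le (p : Submodule F V) :
    Nat.card {W // IsCompl p W} ≤ Nat.card F ^ ((finrank F V - finrank F p) * finrank F p) := by
  have := Module.finite_of_finite F (M := V)
  obtain ⟨W₀, hW₀⟩ := p.exists_isCompl
  let restrict (W : {W // IsCompl p W}) : W₀ →ₗ[F] p := (p.isComplEquivProj W).1 ∘ₗ W₀.subtype
  have h_inj : Function.Injective restrict := by
    intro W₁ W₂ h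
    refine p.isComplEquivProj.injective (Subtype.ext <| LinearMap.ext_on_codisjoint
      hW₀.codisjoint (fun x hx ↦ ?_) fun x hx ↦ LinearMap.congr_fun h ⟨x, hx⟩)
    simp only [(p.isComplEquivProj W₁).2 ⟨x, hx⟩, (p.isComplEquivProj W₂).2 ⟨x, hx⟩]
  have := Module.finite_of_finite F (M := W₀ →ₗ[F] p)
  calc Nat.card {W // IsCompl p W} ≤ Nat.card (W₀ →ₗ[F] p) :=
        Nat.card_le_card_of_injective restrict h_inj
    _ = _ := by
      rw [natCard_eq_pow_finrank (K := F), finrank_linearMap F F, ← finrank_add_eq_of_isCompl hW₀,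
        Nat.add_sub_cancel_left]

theorem Submodule.card_disjoint_and_sup_eq_le {p X : Submodule F V} (hpX : p ≤ X) :
    Nat.card {W : Submodule F V // Disjoint p W ∧ p ⊔ W = X} ≤
      Nat.card F ^ ((finrank F X - finrank F p) * finrank F p) := by
  have := Module.finite_of_finite F (M := V)
  let e := X.mapIic.symm
  have he : finrank F (e ⟨p, hpX⟩) = finrank F p := by
    rw [← finrank_map_subtype_eq, ← coe_mapIic_apply, OrderIso.apply_symm_apply]
  let toCompl (W : {W : Submodule F V // Disjoint p W ∧ p ⊔ W = X}) :
      {W₁ : Submodule F X // IsCompl (e ⟨p, hpX⟩) W₁} :=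
    ⟨e ⟨W.1, W.2.2.le.trans' le_sup_right⟩, e.isCompl_iff.mp (Set.Iic.isCompl_iff.mpr W.2)⟩
  have h_inj : Function.Injective toCompl := fun W₁ W₂ h ↦
    Subtype.ext (Subtype.mk.inj (e.injective (congrArg Subtype.val h)))
  exact (Nat.card_le_card_of_injective toCompl h_inj).trans (he ▸ card_isCompl_le _)

theorem Submodule.card_finrank_eq_le_qbin {m : ℕ} (hV : finrank F V = m) (j : ℕ) :
    Nat.card {W : Submodule F V // finrank F W = j} ≤ qbin (Nat.card F) m j := by
  induction m generalizing V j with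
  | zero =>
    rcases j with _ | j
    · exact card_finrank_eq_zero.le
    refine (Nat.card_eq_zero.mpr (Or.inl ⟨fun W ↦ ?_⟩)).le
    have := W.1.finrank_le
    omega
  | succ m ih =>
    rcases j with _ | j
    · exact card_finrank_eq_zero.le
    have := Module.finite_of_finite F (M := V)
    have : Nontrivial V := finrank_pos_iff (R := F).mp (by omega)
    obtain ⟨v, hv⟩ := exists_ne (0 : V)
    set p := F ∙ v
    have hp : finrank F p = 1 := finrank_span_singleton hv
    have hquot : finrank F (V ⧸ p) = m := by
      have := p.finrank_quotient_add_finrank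
      omega
    have := Module.finite_of_finite F (M := V ⧸ p)
    have h_contain :
        Nat.card {W : Submodule F V // finrank F W = j + 1 ∧ p ≤ W} ≤ qbin (Nat.card F) m j := by
      refine (card_finrank_eq_and_le_le_card_quotient p (j + 1)).trans ?_
      simpa [hp] using ih hquot j
    have h_avoid : Nat.card {W : Submodule F V // finrank F W = j + 1 ∧ ¬ p ≤ W} ≤
        qbin (Nat.card F) m (j + 1) * Nat.card F ^ (j + 1) := by
      let toSup (W : {W : Submodule F V // finrank F W = j + 1 ∧ ¬ p ≤ W}) :
          {X : Submodule F V // finrank F X = j + 2 ∧ p ≤ X} :=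
        ⟨p ⊔ W, by rw [finrank_sup_of_disjoint (disjoint_of_finrank_eq_one_of_not_le hp W.2.2),
          hp, W.2.1, add_comm], le_sup_left⟩
      have h_fiber (X : {X : Submodule F V // finrank F X = j + 2 ∧ p ≤ X}) :
          Nat.card {W // toSup W = X} ≤ Nat.card F ^ (j + 1) := calc
        _ ≤ Nat.card {W : Submodule F V // Disjoint p W ∧ p ⊔ W = X} :=
          Nat.card_le_card_of_injective
            (fun W : {W // toSup W = X} ↦ ⟨W.1.1, disjoint_of_finrank_eq_one_of_not_le hp W.1.2.2,
              congrArg Subtype.val W.2⟩)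
            fun W₁ W₂ h ↦ Subtype.ext (Subtype.ext (Subtype.mk.inj h))
        _ ≤ Nat.card F ^ ((finrank F X - finrank F p) * finrank F p) :=
          card_disjoint_and_sup_eq_le X.2.2
        _ = Nat.card F ^ (j + 1) := by rw [X.2.1, hp]; simp
      refine (Nat.card_le_card_mul_of_card_fiber_le toSup h_fiber).trans
        (Nat.mul_le_mul_right _ ((card_finrank_eq_and_le_le_card_quotient p (j + 2)).trans ?_))
      simpa [hp] using ih hquot (j + 1)
    calc _ = _ + _ := Nat.card_subtype_eq_card_and_add_card_and_not _ (p ≤ ·)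
      _ ≤ qbin (Nat.card F) m j + qbin (Nat.card F) m (j + 1) * Nat.card F ^ (j + 1) :=
        add_le_add h_contain h_avoid
      _ = qbin (Nat.card F) (m + 1) (j + 1) := by rw [qbin]; ring

theorem Submodule.card_finrank_eq_and_le_and_inf_ne_bot_le {P T : Submodule F V}
    (hP : finrank F P = 1) (hPT : ¬ P ≤ T) (k : ℕ) :
    Nat.card {W : Submodule F V // finrank F W = k ∧ P ≤ W ∧ W ⊓ T ≠ ⊥} ≤
      Nat.card (ℙ F T) * qbin (Nat.card F) (finrank F V - 2) (k - 2) := by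
  have := Module.finite_of_finite F (M := V)
  have h_point (W : {W : Submodule F V // finrank F W = k ∧ P ≤ W ∧ W ⊓ T ≠ ⊥}) :
      ∃ x : ℙ F T, (x.rep : V) ∈ W.1 := by
    obtain ⟨v, ⟨hvW, hvT⟩, hv⟩ := exists_mem_ne_zero_of_ne_bot W.2.2.2
    have hv' : (⟨v, hvT⟩ : T) ≠ 0 := by simpa using hv
    obtain ⟨a, ha⟩ := Projectivization.exists_smul_eq_mk_rep F _ hv'
    exact ⟨_, by rw [← ha]; exact W.1.smul_of_tower_mem a hvW⟩
  choose pt hpt using h_point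
  refine Nat.card_le_card_mul_of_card_fiber_le pt fun x ↦ ?_
  let L := P ⊔ F ∙ (x.rep : V)
  have hL : finrank F L = 2 := by
    have h_line_le : F ∙ (x.rep : V) ≤ T := (span_singleton_le_iff_mem _ _).mpr x.rep.2
    rw [finrank_sup_of_disjoint
      ((disjoint_of_finrank_eq_one_of_not_le hP hPT).mono_right h_line_le), hP,
      finrank_span_singleton (by simpa using x.rep_nonzero)]
  have := Module.finite_of_finite F (M := V ⧸ L)
  calc _ ≤ Nat.card {W : Submodule F V // finrank F W = k ∧ L ≤ W} :=
        Nat.card_le_card_of_injective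
          (fun W : {W // pt W = x} ↦ ⟨W.1.1, W.1.2.1, sup_le W.1.2.2.1
            ((span_singleton_le_iff_mem _ _).mpr (W.2 ▸ hpt W.1 :))⟩)
          fun W₁ W₂ h ↦ Subtype.ext (Subtype.ext (Subtype.mk.inj h))
    _ ≤ Nat.card {W : Submodule F (V ⧸ L) // finrank F W = k - 2} :=
        hL ▸ card_finrank_eq_and_le_le_card_quotient L k
    _ ≤ _ := card_finrank_eq_le_qbin (by have := L.finrank_quotient_add_finrank; omega) _

end

theorem dictator_meets_outside_space_general (q n k : ℕ) (F : Type*) [Field F] [Fintype F]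
    (hq : Fintype.card F = q)
    (P T : Submodule F (Fin n → F)) (hP : Module.finrank F P = 1)
    (hT : Module.finrank F T = k) (hPT : ¬ P ≤ T) :
    (Nat.card {W : Submodule F (Fin n → F) //
        Module.finrank F W = k ∧ P ≤ W ∧ W ⊓ T ≠ ⊥} : ℝ) ≤
      ((q : ℝ) ^ k - 1) / (q - 1) * qbin q (n - 2) (k - 2) := by
  have hq1 : (q : ℝ) ≠ 1 := by
    rw [← hq]
    exact_mod_cast Fintype.one_lt_card.ne'
  have h_points : (Nat.card (ℙ F T) : ℝ) = ((q : ℝ) ^ k - 1) / (q - 1) := by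
    rw [Projectivization.card_of_finrank F T hT, Nat.card_eq_fintype_card, hq]
    push_cast
    exact geom_sum_eq hq1 k
  have h_count := card_finrank_eq_and_le_and_inf_ne_bot_le hP hPT k
  rw [finrank_fin_fun, Nat.card_eq_fintype_card (α := F), hq] at h_count
  rw [← h_points]
  exact_mod_cast h_count

theorem dictator_meets_outside_space (q n k : ℕ) (F : Type*) [Field F] [Fintype F]
    (hq : Fintype.card F = q) (hk : 2 ≤ k) (hkn : 2 * k ≤ n)
    (P T : Submodule F (Fin n → F)) (hP : Module.finrank F P = 1)
    (hT : Module.finrank F T = k) (hPT : ¬ P ≤ T) :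
    (Nat.card {W : Submodule F (Fin n → F) //
        Module.finrank F W = k ∧ P ≤ W ∧ W ⊓ T ≠ ⊥} : ℝ) ≤
      ((q : ℝ) ^ k - 1) / (q - 1) * qbin q (n - 2) (k - 2) :=
  dictator_meets_outside_space_general q n k F hq P T hP hT hPT
end

section
/- Let q be a prime power and k ≥ 1, n = mk + r with 0 ≤ r < k. Then the maximum size of a partial spread (a family of pairwise disjoint k-dimensional subspaces of F_q^n) when k divides n (r = 0) is exactly (q^n - 1)/(q^k - 1); in particular a spread of k-spaces of F_q^n exists when k divides n. -/
/-!
The nonzero vectors of the members of a partial spread of `k`-spaces in `F_q^n` are pairwise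
disjoint sets of `q^k - 1` vectors among the `q^n - 1` nonzero vectors, which bounds its size by
`(q^n - 1)/(q^k - 1)`, with equality for a spread. When `n = k m`, `F_q^n` is `F_q`-linearly
isomorphic to `K^m` for the extension `K` of degree `k` of `F_q`, and the `K`-lines of `K^m`
form a spread of `F_q`-subspaces of dimension `k`.
-/

open Module Finset

section Spread

variable {F V : Type*} [Field F] [AddCommGroup V] [Module F V]

def IsPartialSpread (k : ℕ) (S : Finset (Submodule F V)) : Prop :=
  (∀ W ∈ S, finrank F W = k) ∧ ∀ W ∈ S, ∀ W' ∈ S, W ≠ W' → W ⊓ W' = ⊥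

def IsSpread (k : ℕ) (S : Finset (Submodule F V)) : Prop :=
  IsPartialSpread k S ∧ ∀ v : V, v ≠ 0 → ∃ W ∈ S, v ∈ W

theorem IsSpread.map {V' : Type*} [AddCommGroup V'] [Module F V']
    [DecidableEq (Submodule F V')] {k : ℕ} {S : Finset (Submodule F V)}
    (hS : IsSpread k S) (e : V ≃ₗ[F] V') :
    IsSpread k (S.image (Submodule.map (e : V →ₗ[F] V'))) := by
  obtain ⟨⟨hdim, hdisj⟩, hcover⟩ := hS
  refine ⟨⟨?_, ?_⟩, ?_⟩
  · simp only [mem_image]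
    rintro _ ⟨W, hW, rfl⟩
    rw [LinearEquiv.finrank_map_eq, hdim W hW]
  · simp only [mem_image]
    rintro _ ⟨W, hW, rfl⟩ _ ⟨W', hW', rfl⟩ hne
    rw [← Submodule.map_inf _ e.injective, hdisj W hW W' hW' (ne_of_apply_ne _ hne),
      Submodule.map_bot]
  · intro v hv
    obtain ⟨W, hW, hvW⟩ := hcover (e.symm v) (by simpa using hv)
    exact ⟨_, mem_image_of_mem _ hW, Submodule.mem_map.mpr ⟨_, hvW, e.apply_symm_apply v⟩⟩

end Spread

section Counting

variable {F V : Type*} [Field F] [Fintype F] [AddCommGroup V] [Module F V] [Fintype V]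
  {k : ℕ} {S : Finset (Submodule F V)}

open Classical in
theorem IsPartialSpread.card_biUnion_nonzero (hS : IsPartialSpread k S) :
    #(S.biUnion fun W => (W : Set V).toFinset.erase 0) = #S * (Fintype.card F ^ k - 1) := by
  obtain ⟨hdim, hdisj⟩ := hS
  refine (card_biUnion fun W hW W' hW' hne => ?_).trans (sum_const_nat fun W hW => ?_)
  · simp only [disjoint_left, mem_erase, Set.mem_toFinset, SetLike.mem_coe]
    rintro v ⟨hv, hvW⟩ ⟨-, hvW'⟩
    exact hv ((Submodule.mem_bot F).mp (hdisj W hW W' hW' hne ▸ ⟨hvW, hvW'⟩))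
  · rw [card_erase_of_mem (by simp), Set.toFinset_card, ← hdim W hW, ← card_eq_pow_finrank]
    rfl

open Classical in
theorem card_univ_erase_zero :
    #((univ : Finset V).erase 0) = Fintype.card F ^ finrank F V - 1 := by
  rw [card_erase_of_mem (mem_univ 0), card_univ, card_eq_pow_finrank (K := F)]

theorem IsPartialSpread.card_mul_le (hS : IsPartialSpread k S) :
    #S * (Fintype.card F ^ k - 1) ≤ Fintype.card F ^ finrank F V - 1 := by
  classical
  rw [← hS.card_biUnion_nonzero, ← card_univ_erase_zero]
  refine card_le_card fun v hv => ?_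
  obtain ⟨W, -, hvW⟩ := mem_biUnion.mp hv
  exact mem_erase.mpr ⟨(mem_erase.mp hvW).1, mem_univ v⟩

theorem IsSpread.card_mul_eq (hS : IsSpread k S) :
    #S * (Fintype.card F ^ k - 1) = Fintype.card F ^ finrank F V - 1 := by
  classical
  rw [← hS.1.card_biUnion_nonzero, ← card_univ_erase_zero]
  congr 1
  ext v
  simp only [mem_biUnion, mem_erase, Set.mem_toFinset, SetLike.mem_coe, mem_univ, and_true]
  exact ⟨fun ⟨W, _, hv, _⟩ => hv, fun hv => (hS.2 v hv).imp fun W ⟨hW, hvW⟩ => ⟨hW, hv, hvW⟩⟩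

theorem IsPartialSpread.card_le (hS : IsPartialSpread k S) (hk : k ≠ 0) :
    #S ≤ (Fintype.card F ^ finrank F V - 1) / (Fintype.card F ^ k - 1) :=
  (Nat.le_div_iff_mul_le (Nat.sub_pos_of_lt (Nat.one_lt_pow hk Fintype.one_lt_card))).mpr
    hS.card_mul_le

theorem IsSpread.card_eq (hS : IsSpread k S) (hk : k ≠ 0) :
    #S = (Fintype.card F ^ finrank F V - 1) / (Fintype.card F ^ k - 1) := by
  rw [← hS.card_mul_eq, Nat.mul_div_cancel _
    (Nat.sub_pos_of_lt (Nat.one_lt_pow hk Fintype.one_lt_card))]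

end Counting

section Lines

variable {F K V : Type*} [Field F] [Field K] [Algebra F K] [AddCommGroup V] [Module K V]
  [Module F V] [IsScalarTower F K V]

theorem finrank_restrictScalars_span_singleton {v : V} (hv : v ≠ 0) :
    finrank F ((K ∙ v).restrictScalars F) = finrank F K :=
  ((LinearEquiv.toSpanNonzeroSingleton K V v hv).restrictScalars F).finrank_eq.symm

theorem exists_isSpread_finrank_of_isScalarTower [Finite V] :
    ∃ S : Finset (Submodule F V), IsSpread (finrank F K) S := by
  classical
  have := Fintype.ofFinite V
  refine ⟨(univ.erase 0).image fun v : V => (K ∙ v).restrictScalars F, ⟨?_, ?_⟩, ?_⟩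
  · simp only [mem_image, mem_erase]
    rintro _ ⟨v, ⟨hv, -⟩, rfl⟩
    exact finrank_restrictScalars_span_singleton hv
  · simp only [mem_image, mem_erase]
    rintro _ ⟨v, ⟨hv, -⟩, rfl⟩ _ ⟨w, ⟨hw, -⟩, rfl⟩ hne
    have hlines : K ∙ v ≠ K ∙ w := ne_of_apply_ne _ hne
    rw [← Submodule.restrictScalars_inf, disjoint_iff.mp
      ((nonzero_span_atom v hv).disjoint_of_ne (nonzero_span_atom w hw) hlines),
      Submodule.restrictScalars_bot]
  · intro v hv
    exact ⟨_, mem_image_of_mem _ (mem_erase.mpr ⟨hv, mem_univ v⟩),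
      Submodule.mem_span_singleton_self v⟩

end Lines

theorem exists_isSpread_of_dvd_finrank {F V : Type*} [Field F] [Finite F] [AddCommGroup V]
    [Module F V] [FiniteDimensional F V] {k : ℕ} (hk : k ≠ 0) (hdvd : k ∣ finrank F V) :
    ∃ S : Finset (Submodule F V), IsSpread k S := by
  obtain ⟨m, hm⟩ := hdvd
  have : NeZero k := ⟨hk⟩
  have : Fact (ringChar F).Prime := ⟨CharP.char_is_prime F _⟩
  let K := FiniteField.Extension F (ringChar F) k
  have hK : finrank F K = k := FiniteField.finrank_extension F _ k
  have : Finite K := Module.finite_of_finite F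
  have hdim : finrank F (Fin m → K) = finrank F V := by
    rw [← finrank_mul_finrank F K, finrank_fin_fun, hK, hm]
  obtain ⟨S, hS⟩ := exists_isSpread_finrank_of_isScalarTower (F := F) (K := K) (V := Fin m → K)
  classical
  exact ⟨_, hK ▸ hS.map (LinearEquiv.ofFinrankEq _ _ hdim)⟩

theorem spread_exists_and_max_partial_spread_general (q n k : ℕ) (F : Type*) [Field F] [Fintype F]
    (hq : Fintype.card F = q) (hk : 1 ≤ k) (hdvd : k ∣ n) :
    IsGreatest {m : ℕ | ∃ S : Finset (Submodule F (Fin n → F)), S.card = m ∧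
        (∀ W ∈ S, Module.finrank F W = k) ∧
        (∀ W ∈ S, ∀ W' ∈ S, W ≠ W' → W ⊓ W' = ⊥)}
      ((q ^ n - 1) / (q ^ k - 1)) ∧
      ∃ S : Finset (Submodule F (Fin n → F)), S.card = (q ^ n - 1) / (q ^ k - 1) ∧
        (∀ W ∈ S, Module.finrank F W = k) ∧
        (∀ W ∈ S, ∀ W' ∈ S, W ≠ W' → W ⊓ W' = ⊥) ∧
        (∀ v : Fin n → F, v ≠ 0 → ∃ W ∈ S, v ∈ W) := by
  subst hq
  have hk0 : k ≠ 0 := Nat.one_le_iff_ne_zero.mp hk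
  obtain ⟨S, hS⟩ := exists_isSpread_of_dvd_finrank hk0 (F := F) (V := Fin n → F)
    (by rwa [finrank_fin_fun])
  have hcard := hS.card_eq hk0
  rw [finrank_fin_fun] at hcard
  refine ⟨⟨⟨S, hcard, hS.1⟩, ?_⟩, S, hcard, hS.1.1, hS.1.2, hS.2⟩
  rintro _ ⟨T, rfl, hT⟩
  simpa only [finrank_fin_fun] using IsPartialSpread.card_le hT hk0

theorem spread_exists_and_max_partial_spread (q n k : ℕ) (F : Type*) [Field F] [Fintype F]
    [DecidableEq (Submodule F (Fin n → F))]
    (hq : Fintype.card F = q) (hk : 1 ≤ k) (hkn : k ≤ n) (hdvd : k ∣ n) :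
    IsGreatest {m : ℕ | ∃ S : Finset (Submodule F (Fin n → F)), S.card = m ∧
        (∀ W ∈ S, Module.finrank F W = k) ∧
        (∀ W ∈ S, ∀ W' ∈ S, W ≠ W' → W ⊓ W' = ⊥)}
      ((q ^ n - 1) / (q ^ k - 1)) ∧
      ∃ S : Finset (Submodule F (Fin n → F)), S.card = (q ^ n - 1) / (q ^ k - 1) ∧
        (∀ W ∈ S, Module.finrank F W = k) ∧
        (∀ W ∈ S, ∀ W' ∈ S, W ≠ W' → W ⊓ W' = ⊥) ∧
        (∀ v : Fin n → F, v ≠ 0 → ∃ W ∈ S, v ∈ W) :=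
  spread_exists_and_max_partial_spread_general q n k F hq hk hdvd
end
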